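/- arXiv:2602.11840 — 3 statements merged into one kernel-verified Lean document; each statement's English description precedes it below -/
import Mathlib

section
/- Let t ≥ 0 be an integer and let F be a forest with |F| ≥ t + 1. Then there exists a vertex s of F and a subset V' of the vertices of F not containing s, such that no edge of F joins a vertex of V' to a vertex outside V' ∪ {s}, and t ≤ |V'| ≤ 2t. -/
/-!
Call `C` separated by `s` if `s ∉ C` and every edge leaving `C` ends at `s`; for any vertex `s`,
the set of all other vertices is one. Take such a pair with `t ≤ |C|` and `|C|` minimal and
suppose `|C| > 2t`. If `C` is not connected within itself, it splits into two sets separated by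
`s`, one of which still has at least `t` vertices. If it is, acyclicity lets `s` have at most one
neighbour `r` in `C`, and `C \ {r}` is separated by `r`. Either way minimality is contradicted.
-/

open Finset

namespace SimpleGraph

variable {V : Type} {F : SimpleGraph V} {s r : V} {C D : Finset V}

def IsSeparatedBy (F : SimpleGraph V) (s : V) (C : Finset V) : Prop :=
  s ∉ C ∧ ∀ u v : V, F.Adj u v → u ∈ C → v ∈ C ∨ v = s

open Classical in
noncomputable def reachableWithin (F : SimpleGraph V) (C : Finset V) (r : V) : Finset V :=
  C.filter fun v => ∃ p : F.Walk r v, ∀ w ∈ p.support, w ∈ C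

open Classical in
lemma mem_reachableWithin {v : V} :
    v ∈ F.reachableWithin C r ↔ v ∈ C ∧ ∃ p : F.Walk r v, ∀ w ∈ p.support, w ∈ C :=
  mem_filter

lemma reachableWithin_subset : F.reachableWithin C r ⊆ C :=
  fun _ hv => (mem_reachableWithin.1 hv).1

lemma mem_reachableWithin_self (hr : r ∈ C) : r ∈ F.reachableWithin C r :=
  mem_reachableWithin.2 ⟨hr, .nil, by simpa using hr⟩

lemma IsSeparatedBy.reachableWithin (hC : F.IsSeparatedBy s C) :
    F.IsSeparatedBy s (F.reachableWithin C r) := by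
  refine ⟨fun hs => hC.1 (reachableWithin_subset hs), fun u v huv hu => ?_⟩
  obtain ⟨huC, p, hp⟩ := mem_reachableWithin.1 hu
  rcases hC.2 u v huv huC with hvC | rfl
  · refine Or.inl (mem_reachableWithin.2 ⟨hvC, p.concat huv, fun w hw => ?_⟩)
    rw [Walk.support_concat, List.mem_append, List.mem_singleton] at hw
    rcases hw with hw | rfl
    exacts [hp w hw, hvC]
  · exact Or.inr rfl

lemma IsAcyclic.eq_of_adj_of_mem_reachableWithin (hF : F.IsAcyclic) (hs : s ∉ C)
    {r' : V} (hr : F.Adj s r) (hr' : F.Adj s r') (h : r' ∈ F.reachableWithin C r) : r' = r := by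
  obtain ⟨-, p, hp⟩ := mem_reachableWithin.1 h
  by_contra hne
  have hbridge := isBridge_iff_forall_walk_mem_edges.1
    (isAcyclic_iff_forall_adj_isBridge.1 hF hr') (.cons hr p)
  rw [Walk.edges_cons, List.mem_cons] at hbridge
  rcases hbridge with heq | hmem
  · simp [hne, hr.ne] at heq
  · exact hs (hp s (p.fst_mem_support_of_mem_edges hmem))

variable [DecidableEq V]

lemma isSeparatedBy_erase_univ [Fintype V] (F : SimpleGraph V) (s : V) :
    F.IsSeparatedBy s (univ.erase s) := by
  refine ⟨notMem_erase s univ, fun u v _ _ => ?_⟩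
  simpa using em' (v = s)

lemma IsSeparatedBy.sdiff (hC : F.IsSeparatedBy s C) (hD : F.IsSeparatedBy s D) :
    F.IsSeparatedBy s (C \ D) := by
  refine ⟨fun hs => hC.1 (mem_sdiff.1 hs).1, fun u v huv hu => ?_⟩
  rw [mem_sdiff] at hu ⊢
  rcases hC.2 u v huv hu.1 with hvC | rfl
  · by_cases hvD : v ∈ D
    · rcases hD.2 v u huv.symm hvD with huD | rfl
      exacts [absurd huD hu.2, absurd hu.1 hC.1]
    · exact Or.inl ⟨hvC, hvD⟩
  · exact Or.inr rfl

lemma IsSeparatedBy.erase (hC : F.IsSeparatedBy s C)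
    (hnbr : ∀ u ∈ C, F.Adj s u → u = r) : F.IsSeparatedBy r (C.erase r) := by
  refine ⟨notMem_erase r C, fun u v huv hu => ?_⟩
  obtain ⟨hur, huC⟩ := mem_erase.1 hu
  rcases hC.2 u v huv huC with hvC | rfl
  · by_cases hvr : v = r
    exacts [Or.inr hvr, Or.inl (mem_erase.2 ⟨hvr, hvC⟩)]
  · exact absurd (hnbr u huC huv.symm) hur

lemma IsSeparatedBy.exists_ssubset_of_ssubset {t : ℕ} (hC : F.IsSeparatedBy s C)
    (hD : F.IsSeparatedBy s D) (hDC : D ⊂ C) (hD₀ : D.Nonempty) (hcard : 2 * t < #C) :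
    ∃ C' ⊂ C, F.IsSeparatedBy s C' ∧ t ≤ #C' := by
  by_cases ht : t ≤ #D
  · exact ⟨D, hDC, hD, ht⟩
  · refine ⟨C \ D, sdiff_ssubset hDC.subset hD₀, hC.sdiff hD, ?_⟩
    have := card_sdiff_add_card_eq_card hDC.subset
    omega

lemma IsSeparatedBy.exists_ssubset (hF : F.IsAcyclic) {t : ℕ} (hC : F.IsSeparatedBy s C)
    (hcard : 2 * t < #C) : ∃ s', ∃ C' ⊂ C, F.IsSeparatedBy s' C' ∧ t ≤ #C' := by
  obtain ⟨r, hrC, hr⟩ : ∃ r ∈ C, ∀ u ∈ C, F.Adj s u → F.Adj s r := by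
    by_cases hnbr : ∃ r ∈ C, F.Adj s r
    · obtain ⟨r, hrC, hsr⟩ := hnbr
      exact ⟨r, hrC, fun _ _ _ => hsr⟩
    · obtain ⟨r, hrC⟩ := card_pos.1 (by omega : 0 < #C)
      exact ⟨r, hrC, fun u huC hsu => absurd ⟨u, huC, hsu⟩ hnbr⟩
  by_cases hRC : F.reachableWithin C r = C
  · have hnbr : ∀ u ∈ C, F.Adj s u → u = r := fun u huC hsu =>
      hF.eq_of_adj_of_mem_reachableWithin hC.1 (hr u huC hsu) hsu (hRC.symm ▸ huC)
    refine ⟨r, C.erase r, erase_ssubset hrC, hC.erase hnbr, ?_⟩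
    rw [card_erase_of_mem hrC]
    omega
  · have hRC' := ssubset_of_subset_of_ne reachableWithin_subset hRC
    exact ⟨s, hC.exists_ssubset_of_ssubset hC.reachableWithin hRC'
      ⟨r, mem_reachableWithin_self hrC⟩ hcard⟩

theorem IsAcyclic.exists_isSeparatedBy_card_le_two_mul (hF : F.IsAcyclic) {t : ℕ}
    (hC : F.IsSeparatedBy s C) (ht : t ≤ #C) :
    ∃ s' C', F.IsSeparatedBy s' C' ∧ t ≤ #C' ∧ #C' ≤ 2 * t := by
  induction C using Finset.strongInduction generalizing s with
  | H C ih =>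
    by_cases hsmall : #C ≤ 2 * t
    · exact ⟨s, C, hC, ht, hsmall⟩
    · obtain ⟨s', C', hC'C, hC', ht'⟩ := hC.exists_ssubset hF (not_le.1 hsmall)
      exact ih C' hC'C hC' ht'

end SimpleGraph

/-- Separator lemma of Chung and Graham: in any forest `F` with at least `t + 1`
vertices there is a vertex `s` and a set `V'` of vertices, not containing `s`, such
that no edge of `F` joins a vertex of `V'` to a vertex outside `V' ∪ {s}`, and
`t ≤ |V'| ≤ 2t`. -/
theorem stmt_4 {V : Type} [Fintype V] [DecidableEq V]
    (F : SimpleGraph V) (hF : F.IsAcyclic) (t : ℕ)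
    (hcard : t + 1 ≤ Fintype.card V) :
    ∃ (s : V) (V' : Finset V), s ∉ V' ∧
      (∀ u v : V, F.Adj u v → u ∈ V' → (v ∈ V' ∨ v = s)) ∧
      t ≤ V'.card ∧ V'.card ≤ 2 * t := by
  obtain ⟨s⟩ : Nonempty V := Fintype.card_pos_iff.1 (by omega)
  have hstart : t ≤ #(univ.erase s) := by
    rw [card_erase_of_mem (mem_univ s), card_univ]
    omega
  obtain ⟨s', V', ⟨hs', hsep⟩, ht, h2t⟩ :=
    hF.exists_isSeparatedBy_card_le_two_mul (F.isSeparatedBy_erase_univ s) hstart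
  exact ⟨s', V', hs', hsep, ht, h2t⟩
end

section
/- Let m, M be integers with 0 ≤ m and 2m ≤ M, and let F be a forest with |F| ≥ M + 1. Then there exists a vertex s of F and a partition of F minus s into parts F_1, F_2, F_3 such that m ≤ |F_3| ≤ M, |F_1| ≤ |F| − 1 − M, and |F_2| ≤ |F_1|. -/
/-!
Let `n = |F|`. Take a vertex `v` and a union `X` of components of `F - v` with
`|X| ≥ n - 1 - M`, and `|X|` as small as possible. Since `F` is a forest, each component `W`
of `F - v` contains at most one neighbour `w` of `v`, and `W - w` is a union of components of
`F - w`; so minimality forces every component inside `X` to have at most `n - 1 - M` vertices,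
while the components outside `X` have at most `M` vertices in total.

If some component `Z ⊆ X` has more than `M` vertices, run the same descent inside `Z` with
threshold `M`: it gives a vertex `s` and a union `Y` of components of `F - s`, each of size at
most `M`, with `M ≤ |Y| ≤ n - 1 - M`; a greedy choice of components in `Y` is the part `F₃`.
Otherwise add components of `X` greedily to the components outside `X` while the total stays
at most `M`. If the result `C` has at least `m` vertices it is `F₃`; if not, every leftover
component has more than `M - m ≥ M / 2` vertices, and two of them serve as `F₃` and `F₁`.
-/

open Finset

namespace SimpleGraph

variable {V : Type*} {F : SimpleGraph V} {s x : V}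

/-- `X` is a union of connected components of `F - s`. -/
def IsUnionOfComponents (F : SimpleGraph V) (s : V) (X : Finset V) : Prop :=
  s ∉ X ∧ ∀ ⦃a b⦄, (F.deleteIncidenceSet s).Adj a b → a ∈ X → b ∈ X

namespace IsUnionOfComponents

variable {X Y : Finset V}

lemma empty : IsUnionOfComponents F s ∅ :=
  ⟨notMem_empty s, fun _ _ _ h => absurd h (notMem_empty _)⟩

lemma univ_erase [Fintype V] [DecidableEq V] : IsUnionOfComponents F s (univ.erase s) :=
  ⟨notMem_erase s univ, fun _ b h _ =>
    mem_erase.2 ⟨(deleteIncidenceSet_adj.1 h).2.2, mem_univ b⟩⟩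

lemma subset_univ_erase [Fintype V] [DecidableEq V] (hX : IsUnionOfComponents F s X) :
    X ⊆ univ.erase s :=
  fun _ hx => mem_erase.2 ⟨ne_of_mem_of_not_mem hx hX.1, mem_univ _⟩

lemma card_compl_add_card [Fintype V] [DecidableEq V] (hX : IsUnionOfComponents F s X) :
    #(univ.erase s \ X) + #X = Fintype.card V - 1 := by
  rw [card_sdiff_add_card_eq_card hX.subset_univ_erase, card_erase_of_mem (mem_univ s),
    card_univ]

lemma union [DecidableEq V] (hX : IsUnionOfComponents F s X) (hY : IsUnionOfComponents F s Y) :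
    IsUnionOfComponents F s (X ∪ Y) := by
  refine ⟨by simp [hX.1, hY.1], fun a b h ha => ?_⟩
  rcases mem_union.1 ha with ha | ha
  exacts [mem_union_left _ (hX.2 h ha), mem_union_right _ (hY.2 h ha)]

lemma sdiff [DecidableEq V] (hX : IsUnionOfComponents F s X) (hY : IsUnionOfComponents F s Y) :
    IsUnionOfComponents F s (X \ Y) :=
  ⟨fun h => hX.1 (mem_sdiff.1 h).1, fun _ _ h ha =>
    mem_sdiff.2 ⟨hX.2 h (mem_sdiff.1 ha).1, fun hb => (mem_sdiff.1 ha).2 (hY.2 h.symm hb)⟩⟩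

lemma not_adj (hX : IsUnionOfComponents F s X) (hY : IsUnionOfComponents F s Y)
    (hXY : Disjoint X Y) {u v : V} (hu : u ∈ X) (hv : v ∈ Y) : ¬F.Adj u v := fun h =>
  Finset.disjoint_left.1 hXY (hX.2 (deleteIncidenceSet_adj.2
    ⟨h, ne_of_mem_of_not_mem hu hX.1, ne_of_mem_of_not_mem hv hY.1⟩) hu) hv

lemma mem_of_reachable (hX : IsUnionOfComponents F s X) {y : V}
    (h : (F.deleteIncidenceSet s).Reachable x y) (hx : x ∈ X) : y ∈ X := by
  obtain h' := (reachable_iff_reflTransGen x y).1 h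
  clear h
  induction h' with
  | refl => exact hx
  | tail _ hab ih => exact hX.2 hab ih

end IsUnionOfComponents

section Component

variable [Fintype V]

open Classical in
/-- The connected component of `x` in `F - s`. -/
noncomputable def component (F : SimpleGraph V) (s x : V) : Finset V :=
  univ.filter ((F.deleteIncidenceSet s).Reachable x)

lemma mem_component {y : V} : y ∈ F.component s x ↔ (F.deleteIncidenceSet s).Reachable x y := by
  simp [component]

lemma mem_component_self : x ∈ F.component s x :=
  mem_component.2 (Reachable.refl x)

lemma IsUnionOfComponents.component_subset {X : Finset V} (hX : IsUnionOfComponents F s X)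
    (hx : x ∈ X) : F.component s x ⊆ X :=
  fun _ hy => hX.mem_of_reachable (mem_component.1 hy) hx

lemma isUnionOfComponents_component [DecidableEq V] (hx : x ≠ s) :
    IsUnionOfComponents F s (F.component s x) :=
  ⟨fun h => notMem_erase s univ
      (IsUnionOfComponents.univ_erase.component_subset (mem_erase.2 ⟨hx, mem_univ x⟩) h),
    fun _ _ h ha => mem_component.2 ((mem_component.1 ha).trans h.reachable)⟩

end Component

lemma IsAcyclic.eq_of_adj_of_reachable_deleteIncidenceSet (hF : F.IsAcyclic) {v a b : V}
    (ha : F.Adj v a) (hb : F.Adj v b) (hab : (F.deleteIncidenceSet v).Reachable a b) :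
    a = b := by
  by_contra hne
  apply isBridge_iff.1 (isAcyclic_iff_forall_adj_isBridge.1 hF ha)
  have hle : F.deleteIncidenceSet v ≤ F.deleteEdges {s(v, a)} := fun x y h => by
    rw [deleteIncidenceSet_adj] at h
    rw [deleteEdges_adj, Set.mem_singleton_iff, Sym2.eq_iff]
    exact ⟨h.1, by tauto⟩
  have hvb : (F.deleteEdges {s(v, a)}).Adj v b := by
    rw [deleteEdges_adj, Set.mem_singleton_iff, Sym2.eq_iff]
    exact ⟨hb, by grind [hb.ne]⟩
  exact hvb.reachable.trans (hab.mono hle).symm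

variable [Fintype V] [DecidableEq V]

/-- Take for `w` the neighbour of `s` in the component, if any; it is unique as `F` is a forest. -/
lemma exists_isUnionOfComponents_component_erase (hF : F.IsAcyclic) (hx : x ≠ s) :
    ∃ w ∈ F.component s x, IsUnionOfComponents F w ((F.component s x).erase w) := by
  have hW := isUnionOfComponents_component (F := F) hx
  obtain ⟨w, hwW, hw⟩ :
      ∃ w ∈ F.component s x, ∀ a ∈ F.component s x, F.Adj s a → a = w := by
    by_cases h : ∃ w ∈ F.component s x, F.Adj s w
    · obtain ⟨w, hwW, hsw⟩ := h
      exact ⟨w, hwW, fun a ha hsa => hF.eq_of_adj_of_reachable_deleteIncidenceSet hsa hsw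
        ((mem_component.1 ha).symm.trans (mem_component.1 hwW))⟩
    · push Not at h
      exact ⟨x, mem_component_self, fun a ha hsa => absurd hsa (h a ha)⟩
  refine ⟨w, hwW, notMem_erase w _, fun a b hab ha => ?_⟩
  rw [deleteIncidenceSet_adj] at hab
  obtain ⟨haw, haW⟩ := mem_erase.1 ha
  refine mem_erase.2 ⟨hab.2.2, ?_⟩
  by_cases hbs : b = s
  · subst hbs
    exact absurd (hw a haW hab.1.symm) haw
  · exact hW.2 (deleteIncidenceSet_adj.2 ⟨hab.1, ne_of_mem_of_not_mem haW hW.1, hbs⟩) haW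

lemma exists_isUnionOfComponents_card_component_le (hF : F.IsAcyclic) (k : ℕ) {s₀ : V}
    {X₀ : Finset V} (hX₀ : IsUnionOfComponents F s₀ X₀) (hk : k ≤ #X₀) :
    ∃ s X, IsUnionOfComponents F s X ∧ k ≤ #X ∧ #X ≤ #X₀ ∧
      ∀ x ∈ X, #(F.component s x) ≤ k := by
  induction hn : #X₀ using Nat.strong_induction_on generalizing s₀ X₀ with
  | _ n ih =>
  by_cases hsmall : ∀ x ∈ X₀, #(F.component s₀ x) ≤ k
  · exact ⟨s₀, X₀, hX₀, hk, hn.le, hsmall⟩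
  push Not at hsmall
  obtain ⟨x, hx, hbig⟩ := hsmall
  obtain ⟨w, hw, hW⟩ :=
    exists_isUnionOfComponents_component_erase hF (ne_of_mem_of_not_mem hx hX₀.1)
  have hcard := card_erase_add_one hw
  have hsub := card_le_card (hX₀.component_subset hx)
  obtain ⟨s, X, hX, hkX, hXle, hsm⟩ := ih _ (by omega) hW (by omega) rfl
  exact ⟨s, X, hX, hkX, by omega, hsm⟩

lemma exists_maximal_isUnionOfComponents {O Y : Finset V} {c : ℕ}
    (hO : IsUnionOfComponents F s O) (hY : IsUnionOfComponents F s Y) (hOY : O ⊆ Y)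
    (hOc : #O ≤ c) :
    ∃ C, IsUnionOfComponents F s C ∧ O ⊆ C ∧ C ⊆ Y ∧ #C ≤ c ∧
      ∀ x ∈ Y \ C, c < #C + #(F.component s x) := by
  classical
  obtain ⟨C, hC, hmax⟩ := exists_max_image
    {C ∈ Y.powerset | IsUnionOfComponents F s C ∧ O ⊆ C ∧ #C ≤ c} card
    ⟨O, by simp [hO, hOY, hOc]⟩
  simp only [mem_filter, mem_powerset] at hC
  obtain ⟨hCY, hC, hOC, hCc⟩ := hC
  refine ⟨C, hC, hOC, hCY, hCc, fun x hx => ?_⟩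
  have hZ := (hY.sdiff hC).component_subset hx
  have hdisj : Disjoint C (F.component s x) := disjoint_sdiff.mono_right hZ
  have hZC : IsUnionOfComponents F s (C ∪ F.component s x) :=
    hC.union (isUnionOfComponents_component (ne_of_mem_of_not_mem (mem_sdiff.1 hx).1 hY.1))
  by_contra! hle
  have hCZ := hmax (C ∪ F.component s x) (by
    simp only [mem_filter, mem_powerset]
    exact ⟨union_subset hCY (hZ.trans sdiff_subset), hZC, hOC.trans subset_union_left,
      (card_union_of_disjoint hdisj).trans_le hle⟩)
  rw [card_union_of_disjoint hdisj] at hCZ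
  have := card_pos.2 ⟨x, mem_component_self (F := F) (s := s)⟩
  omega

lemma exists_isUnionOfComponents_card_mem_Icc {m M : ℕ} (hmM : 2 * m ≤ M) {Y : Finset V}
    (hY : IsUnionOfComponents F s Y) (hmY : m ≤ #Y)
    (hsmall : ∀ x ∈ Y, #(F.component s x) ≤ M) :
    ∃ C, IsUnionOfComponents F s C ∧ C ⊆ Y ∧ m ≤ #C ∧ #C ≤ M := by
  obtain ⟨C, hC, -, hCY, hCM, hmax⟩ :=
    exists_maximal_isUnionOfComponents .empty hY (empty_subset Y) (Nat.zero_le M)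
  by_cases hmC : m ≤ #C
  · exact ⟨C, hC, hCY, hmC, hCM⟩
  obtain ⟨x, hx⟩ : (Y \ C).Nonempty := by
    rw [nonempty_iff_ne_empty, Ne, sdiff_eq_empty_iff_subset]
    intro h
    have := card_le_card h
    omega
  have hxY := (mem_sdiff.1 hx).1
  have hCx := hmax x hx
  have hxM := hsmall x hxY
  exact ⟨F.component s x, isUnionOfComponents_component (ne_of_mem_of_not_mem hxY hY.1),
    hY.component_subset hxY, by omega, hxM⟩

def IsSeparator (F : SimpleGraph V) (m M : ℕ) (s : V) : Prop :=
  ∃ F1 F2 F3 : Finset V, Disjoint F1 F2 ∧ Disjoint F1 F3 ∧ Disjoint F2 F3 ∧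
    F1 ∪ F2 ∪ F3 = univ.erase s ∧
    (∀ u v : V, F.Adj u v →
      ¬(u ∈ F1 ∧ v ∈ F2) ∧ ¬(u ∈ F1 ∧ v ∈ F3) ∧ ¬(u ∈ F2 ∧ v ∈ F3)) ∧
    m ≤ #F3 ∧ #F3 ≤ M ∧ #F1 ≤ Fintype.card V - 1 - M ∧ #F2 ≤ #F1

lemma isSeparator_of_isUnionOfComponents {m M : ℕ} {F1 F2 F3 : Finset V}
    (h1 : IsUnionOfComponents F s F1) (h2 : IsUnionOfComponents F s F2)
    (h3 : IsUnionOfComponents F s F3) (h12 : Disjoint F1 F2) (h13 : Disjoint F1 F3)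
    (h23 : Disjoint F2 F3) (hcover : F1 ∪ F2 ∪ F3 = univ.erase s) (hm : m ≤ #F3)
    (hM : #F3 ≤ M) (h1card : #F1 + M + 1 ≤ Fintype.card V) (h21 : #F2 ≤ #F1) :
    IsSeparator F m M s :=
  ⟨F1, F2, F3, h12, h13, h23, hcover, fun _ _ huv =>
    ⟨fun h => h1.not_adj h2 h12 h.1 h.2 huv, fun h => h1.not_adj h3 h13 h.1 h.2 huv,
      fun h => h2.not_adj h3 h23 h.1 h.2 huv⟩, hm, hM, by omega, h21⟩

/-- The third part `B` is the rest of `F - s`; `F₁` is the larger of `A` and `B`. -/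
lemma isSeparator_of_card_le {m M : ℕ} {C A : Finset V} (hC : IsUnionOfComponents F s C)
    (hA : IsUnionOfComponents F s A) (hCA : Disjoint C A) (hm : m ≤ #C) (hCM : #C ≤ M)
    (hMCA : M ≤ #C + #A) (hAcard : #A + M + 1 ≤ Fintype.card V) :
    IsSeparator F m M s := by
  set B := univ.erase s \ (C ∪ A)
  have hB : IsUnionOfComponents F s B := IsUnionOfComponents.univ_erase.sdiff (hC.union hA)
  have hsub : C ∪ A ⊆ univ.erase s := (hC.union hA).subset_univ_erase
  have hcover : B ∪ (C ∪ A) = univ.erase s := sdiff_union_of_subset hsub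
  have hBcard : #B + (#C + #A) = Fintype.card V - 1 := by
    rw [← card_union_of_disjoint hCA]
    exact (hC.union hA).card_compl_add_card
  have hBC : Disjoint B C := disjoint_sdiff_self_left.mono_right subset_union_left
  have hBA : Disjoint B A := disjoint_sdiff_self_left.mono_right subset_union_right
  rcases le_total #B #A with hAB | hAB
  · exact isSeparator_of_isUnionOfComponents hA hB hC hBA.symm hCA.symm hBC
      (by rw [← hcover]; ac_rfl) hm hCM hAcard hAB
  · exact isSeparator_of_isUnionOfComponents hB hA hC hBA hBC hCA.symm
      (by rw [← hcover]; ac_rfl) hm hCM (by omega) hAB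

lemma isSeparator_of_card_component_le {m M : ℕ} (hmM : 2 * m ≤ M) {X : Finset V}
    (hX : IsUnionOfComponents F s X) (hMX : M ≤ #X) (hXM : #X + M + 1 ≤ Fintype.card V)
    (hsmall : ∀ x ∈ X, #(F.component s x) ≤ M) :
    IsSeparator F m M s := by
  obtain ⟨C, hC, hCX, hmC, hCM⟩ :=
    exists_isUnionOfComponents_card_mem_Icc hmM hX (by omega) hsmall
  have hAcard := hX.card_compl_add_card
  exact isSeparator_of_card_le hC (IsUnionOfComponents.univ_erase.sdiff hX)
    (disjoint_sdiff.mono_left hCX) hmC hCM (by omega) (by omega)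

lemma exists_isSeparator_of_card_component {m M : ℕ} (hF : F.IsAcyclic) (hmM : 2 * m ≤ M)
    (hx : x ≠ s) (hM : M < #(F.component s x))
    (hcard : #(F.component s x) + M + 1 ≤ Fintype.card V) :
    ∃ s', IsSeparator F m M s' := by
  obtain ⟨w, hw, hW⟩ := exists_isUnionOfComponents_component_erase hF hx
  have hWcard := card_erase_add_one hw
  obtain ⟨s', X, hX, hMX, hXW, hsmall⟩ :=
    exists_isUnionOfComponents_card_component_le hF M hW (by omega)
  exact ⟨s', isSeparator_of_card_component_le hmM hX hMX (by omega) hsmall⟩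

lemma isSeparator_of_card_le_of_card_component_le {m M : ℕ} (hmM : 2 * m ≤ M)
    (hcard : M + 1 ≤ Fintype.card V) {O : Finset V} (hO : IsUnionOfComponents F s O)
    (hOM : #O ≤ M)
    (hsmall : ∀ x ∉ O, x ≠ s →
      #(F.component s x) ≤ M ∧ #(F.component s x) + M + 1 ≤ Fintype.card V) :
    IsSeparator F m M s := by
  obtain ⟨C, hC, hOC, -, hCM, hmax⟩ := exists_maximal_isUnionOfComponents hO
    .univ_erase hO.subset_univ_erase hOM
  set R := univ.erase s \ C
  have hR : IsUnionOfComponents F s R := IsUnionOfComponents.univ_erase.sdiff hC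
  have hRC : #R + #C = Fintype.card V - 1 := hC.card_compl_add_card
  have hcomp : ∀ x ∈ R, IsUnionOfComponents F s (F.component s x) ∧
      M < #C + #(F.component s x) ∧ #(F.component s x) ≤ M ∧
      #(F.component s x) + M + 1 ≤ Fintype.card V := by
    intro x hx
    obtain ⟨hxs, hxC⟩ := mem_sdiff.1 hx
    exact ⟨isUnionOfComponents_component (ne_of_mem_erase hxs), hmax x hx,
      hsmall x (fun h => hxC (hOC h)) (ne_of_mem_erase hxs)⟩
  rcases R.eq_empty_or_nonempty with hR0 | ⟨x, hx⟩
  · rw [hR0, card_empty] at hRC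
    exact isSeparator_of_card_le hC .empty (disjoint_empty_right C) (by omega) hCM
      (by simp; omega) (by simp; omega)
  obtain ⟨hZ, hCZ, hZM, hZn⟩ := hcomp x hx
  by_cases hmC : m ≤ #C
  · exact isSeparator_of_card_le hC hZ (disjoint_sdiff.mono_right (hR.component_subset hx)) hmC
      hCM hCZ.le hZn
  -- two leftover components, each of size more than `M - m ≥ M / 2`
  obtain ⟨y, hy⟩ : (R \ F.component s x).Nonempty := by
    rw [nonempty_iff_ne_empty, Ne, sdiff_eq_empty_iff_subset]
    intro h
    have := card_le_card h
    omega
  have hyR := (mem_sdiff.1 hy).1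
  obtain ⟨hT, hCT, -, hTn⟩ := hcomp y hyR
  exact isSeparator_of_card_le hZ hT
    (disjoint_sdiff.mono_right ((hR.sdiff hZ).component_subset hy)) (by omega) hZM (by omega) hTn

theorem exists_isSeparator {m M : ℕ} (hF : F.IsAcyclic) (hmM : 2 * m ≤ M)
    (hcard : M + 1 ≤ Fintype.card V) : ∃ s, IsSeparator F m M s := by
  obtain ⟨v₀⟩ : Nonempty V := Fintype.card_pos_iff.1 (by omega)
  obtain ⟨s, X, hX, hkX, -, hsmall⟩ :=
    exists_isUnionOfComponents_card_component_le hF (Fintype.card V - 1 - M)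
      (IsUnionOfComponents.univ_erase (s := v₀))
      (by rw [card_erase_of_mem (mem_univ _), card_univ]; omega)
  by_cases hbig : ∃ x ∈ X, M < #(F.component s x)
  · obtain ⟨x, hx, hMx⟩ := hbig
    have := hsmall x hx
    exact exists_isSeparator_of_card_component hF hmM (ne_of_mem_of_not_mem hx hX.1) hMx
      (by omega)
  push Not at hbig
  have hOcard := hX.card_compl_add_card
  refine ⟨s, isSeparator_of_card_le_of_card_component_le hmM hcard
    (IsUnionOfComponents.univ_erase.sdiff hX) (by omega) fun x hxO hxs => ?_⟩
  have hx : x ∈ X := by simpa [hxs] using hxO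
  have := hsmall x hx
  exact ⟨hbig x hx, by omega⟩

end SimpleGraph

/-- Separator lemma: for `0 ≤ m`, `2m ≤ M` and a forest `F` with `|F| ≥ M + 1`, there
is a vertex `s` and a partition of `F` minus `s` into parts `F₁, F₂, F₃` (pairwise
disjoint vertex sets covering all vertices except `s`, with no edge of `F` between
different parts) with `m ≤ |F₃| ≤ M`, `|F₁| ≤ |F| - 1 - M` and `|F₂| ≤ |F₁|`. -/
theorem stmt_5 {V : Type} [Fintype V] [DecidableEq V]
    (F : SimpleGraph V) (hF : F.IsAcyclic) (m M : ℕ)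
    (hmM : 2 * m ≤ M) (hcard : M + 1 ≤ Fintype.card V) :
    ∃ (s : V) (F1 F2 F3 : Finset V),
      Disjoint F1 F2 ∧ Disjoint F1 F3 ∧ Disjoint F2 F3 ∧
      F1 ∪ F2 ∪ F3 = Finset.univ.erase s ∧
      (∀ u v : V, F.Adj u v →
        ¬(u ∈ F1 ∧ v ∈ F2) ∧ ¬(u ∈ F1 ∧ v ∈ F3) ∧ ¬(u ∈ F2 ∧ v ∈ F3)) ∧
      m ≤ F3.card ∧ F3.card ≤ M ∧
      F1.card ≤ Fintype.card V - 1 - M ∧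
      F2.card ≤ F1.card :=
  SimpleGraph.exists_isSeparator hF hmM hcard
end

section
/- Let t ≥ 0 and w ≥ 1 be integers and let G be a graph with treewidth exactly w and |G| ≥ t + w + 1. Then for every normal tree-decomposition (B_x : x ∈ T) of G of width w, there exists a vertex z of T and a set F of vertices of T with z ∉ F such that t ≤ |(⋃_{x∈F} B_x) \ B_z| ≤ 2t. -/
/-- `(T, B)` is a tree-decomposition of the graph `G`: `T` is a tree, every vertex of
`G` lies in some bag, every edge of `G` has both endpoints in a common bag, and for
each vertex of `G` the set of tree-vertices whose bag contains it induces a connected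
subgraph (subtree) of `T`. -/
def IsTreeDecomp {V ι : Type} (G : SimpleGraph V) (T : SimpleGraph ι)
    (B : ι → Finset V) : Prop :=
  T.IsTree ∧
  (∀ v : V, ∃ x : ι, v ∈ B x) ∧
  (∀ u v : V, G.Adj u v → ∃ x : ι, u ∈ B x ∧ v ∈ B x) ∧
  (∀ v : V, (T.induce {x : ι | v ∈ B x}).Connected)

/-- The treewidth of `G` is at most `w`: there is a tree-decomposition all of whose
bags have size at most `w + 1`. -/
def TreewidthLE {V : Type} (G : SimpleGraph V) (w : ℕ) : Prop :=
  ∃ (ι : Type) (_ : Fintype ι) (T : SimpleGraph ι) (B : ι → Finset V),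
    IsTreeDecomp G T B ∧ ∀ x : ι, (B x).card ≤ w + 1

/-- For a graph `G` with treewidth exactly `w ≥ 1` and `|G| ≥ t + w + 1`, every normal
tree-decomposition of `G` of width `w` (all bags of size exactly `w + 1`, adjacent bags
intersecting in exactly `w` vertices) admits a tree-vertex `z` and a set `F` of
tree-vertices with `z ∉ F` such that `t ≤ |(⋃_{x ∈ F} B_x) \ B_z| ≤ 2t`. -/
theorem stmt_8 {V ι : Type} [Fintype V] [DecidableEq V] [Fintype ι] [DecidableEq ι]
    (G : SimpleGraph V) (w t : ℕ) (hw : 1 ≤ w)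
    (htw : TreewidthLE G w ∧ ¬ TreewidthLE G (w - 1))
    (hcard : t + w + 1 ≤ Fintype.card V)
    (T : SimpleGraph ι) (B : ι → Finset V)
    (hdec : IsTreeDecomp G T B)
    (hbags : ∀ x : ι, (B x).card = w + 1)
    (hadj : ∀ x y : ι, T.Adj x y → (B x ∩ B y).card = w) :
    ∃ (z : ι) (F : Finset ι), z ∉ F ∧
      t ≤ (F.biUnion B \ B z).card ∧ (F.biUnion B \ B z).card ≤ 2 * t := by
  obtain ⟨z⟩ : Nonempty ι := hdec.1.isConnected.nonempty
  -- If `insert z F` covers all tree vertices, the count is at least `t`.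
  have hfull : ∀ F : Finset ι, insert z F = Finset.univ →
      t ≤ (F.biUnion B \ B z).card := by
    intro F hF
    have hsub : (Finset.univ \ B z : Finset V) ⊆ F.biUnion B \ B z := by
      intro v hv
      rw [Finset.mem_sdiff] at hv ⊢
      obtain ⟨x, hx⟩ := hdec.2.1 v
      have hxz : x ≠ z := by rintro rfl; exact hv.2 hx
      have hxF : x ∈ F := by
        have : x ∈ insert z F := hF ▸ Finset.mem_univ x
        rcases Finset.mem_insert.mp this with h | h
        · exact absurd h hxz
        · exact h
      exact ⟨Finset.mem_biUnion.mpr ⟨x, hxF, hx⟩, hv.2⟩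
    have h1 : (Finset.univ \ B z : Finset V).card = Fintype.card V - (w + 1) := by
      rw [Finset.card_sdiff_of_subset (Finset.subset_univ _), Finset.card_univ, hbags]
    have := Finset.card_le_card hsub
    omega
  have main : ∀ k (F : Finset ι), z ∉ F → (F.biUnion B \ B z).card ≤ t →
      (Finset.univ \ insert z F).card ≤ k →
      ∃ F' : Finset ι, z ∉ F' ∧ t ≤ (F'.biUnion B \ B z).card ∧
        (F'.biUnion B \ B z).card ≤ 2 * t := by
    intro k
    induction k with
    | zero =>
      intro F hzF hle hk
      have hF : insert z F = Finset.univ := by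
        have he : Finset.univ \ insert z F = ∅ := Finset.card_eq_zero.mp (Nat.le_zero.mp hk)
        exact Finset.univ_subset_iff.mp (Finset.sdiff_eq_empty_iff_subset.mp he)
      exact ⟨F, hzF, hfull F hF, by omega⟩
    | succ k ih =>
      intro F hzF hle hk
      by_cases ht : t ≤ (F.biUnion B \ B z).card
      · exact ⟨F, hzF, ht, by omega⟩
      push_neg at ht
      -- `insert z F` is not everything
      have hne : insert z F ≠ Finset.univ := by
        intro h
        exact absurd (hfull F h) (by omega)
      obtain ⟨x', hx'⟩ : ∃ x', x' ∉ insert z F := by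
        by_contra h
        push_neg at h
        exact hne (Finset.eq_univ_iff_forall.mpr h)
      obtain ⟨p⟩ := hdec.1.isConnected z x'
      obtain ⟨d, _, hdfst, hdsnd⟩ := p.exists_boundary_dart (↑(insert z F) : Set ι)
        (by simp) (by simpa using hx')
      set y := d.fst with hy
      set x := d.snd with hx
      have hyF : y ∈ insert z F := hdfst
      have hxF : x ∉ insert z F := hdsnd
      have hxz : x ≠ z := fun h => hxF (h ▸ Finset.mem_insert_self z F)
      have hadjxy : T.Adj y x := d.adj
      -- `B x \ B y` has exactly one element
      have hone : (B x \ B y).card = 1 := by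
        have h1 : (B x \ B y).card + (B x ∩ B y).card = (B x).card :=
          Finset.card_sdiff_add_card_inter _ _
        have h2 : (B x ∩ B y).card = w := by
          rw [Finset.inter_comm]; exact hadj y x hadjxy
        rw [h2, hbags] at h1
        omega
      set F' : Finset ι := insert x F with hF'
      have hzF' : z ∉ F' := by
        rw [hF', Finset.mem_insert]
        rintro (h | h)
        · exact hxz h.symm
        · exact hzF h
      have hsub : F'.biUnion B \ B z ⊆ (F.biUnion B \ B z) ∪ (B x \ B y) := by
        intro v hv
        rw [Finset.mem_sdiff, Finset.mem_biUnion] at hv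
        obtain ⟨⟨a, haF', hva⟩, hvz⟩ := hv
        rw [hF', Finset.mem_insert] at haF'
        rcases haF' with rfl | haF
        · -- a = x
          by_cases hvy : v ∈ B y
          · rcases Finset.mem_insert.mp hyF with rfl | hyF2
            · exact absurd hvy hvz
            · exact Finset.mem_union_left _ (Finset.mem_sdiff.mpr
                ⟨Finset.mem_biUnion.mpr ⟨y, hyF2, hvy⟩, hvz⟩)
          · exact Finset.mem_union_right _ (Finset.mem_sdiff.mpr ⟨hva, hvy⟩)
        · exact Finset.mem_union_left _ (Finset.mem_sdiff.mpr
            ⟨Finset.mem_biUnion.mpr ⟨a, haF, hva⟩, hvz⟩)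
      have hcount : (F'.biUnion B \ B z).card ≤ (F.biUnion B \ B z).card + 1 := by
        calc (F'.biUnion B \ B z).card
            ≤ ((F.biUnion B \ B z) ∪ (B x \ B y)).card := Finset.card_le_card hsub
          _ ≤ (F.biUnion B \ B z).card + (B x \ B y).card := Finset.card_union_le _ _
          _ = (F.biUnion B \ B z).card + 1 := by rw [hone]
      apply ih F' hzF' (by omega)
      -- the complement strictly shrinks
      have hss : Finset.univ \ insert z F' ⊂ Finset.univ \ insert z F := by
        constructor
        · intro a ha
          rw [Finset.mem_sdiff] at ha ⊢
          refine ⟨ha.1, fun h => ha.2 ?_⟩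
          rw [hF']
          rcases Finset.mem_insert.mp h with rfl | h2
          · exact Finset.mem_insert_self _ _
          · exact Finset.mem_insert_of_mem (Finset.mem_insert_of_mem h2)
        · intro h
          have hx1 : x ∈ Finset.univ \ insert z F :=
            Finset.mem_sdiff.mpr ⟨Finset.mem_univ x, hxF⟩
          have hx2 := h hx1
          rw [Finset.mem_sdiff] at hx2
          exact hx2.2 (by rw [hF']; exact Finset.mem_insert_of_mem (Finset.mem_insert_self x F))
      have := Finset.card_lt_card hss
      omega
  have h0 : ((∅ : Finset ι).biUnion B \ B z).card ≤ t := by simp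
  obtain ⟨F, hzF, h1, h2⟩ := main (Finset.univ \ insert z (∅ : Finset ι)).card ∅
    (Finset.notMem_empty z) h0 le_rfl
  exact ⟨z, F, hzF, h1, h2⟩
end
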